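/- There exists α ∈ (0, π/2) such that |φ₀(r·e^{iθ})| < 3/4 for every r ≥ 0 and every θ ∈ ℝ with |θ − π| ≤ α/2. -/

import Mathlib

open Complex MeasureTheory Filter Topology

/-- Gross's function `φ₀(z) = (1/2) [ (2/√π) ∫₀^z e^{-w²} dw - e^{-z²} + 1 ]`,
with the integral taken along the straight line segment from `0` to `z`. -/
noncomputable def phi0 (z : ℂ) : ℂ :=
  (1 / 2) * ((2 / (Real.sqrt Real.pi : ℂ)) *
      (∫ t in (0:ℝ)..1, z * Complex.exp (-((t : ℂ) * z) ^ 2))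
    - Complex.exp (-z ^ 2) + 1)

/-!
Write the point as `-w` with `w = r e^{iβ}` and `|β| ≤ 1/20`, so that
`Re w² = r² cos 2β ≥ 0`.
For small `r` the integral term of `φ₀` is at most `r` and `|e^{-w²} - 1| ≤ r²`.
For large `r`, rotating the half-line Gaussian integral by `β` gives
`(2/√π) ∫₀^w e^{-u²} du = 1 - (2/√π) e^{iβ} ∫_r^∞ e^{-e^{2iβ} s²} ds`, hence
`φ₀(-w) = e^{iβ} ∫_r^∞ e^{-e^{2iβ} s²} ds / √π - e^{-w²} / 2`, and both terms are
`O(e^{-r² cos 2β})` by the elementary Gaussian tail bound.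
-/

theorem Complex.norm_exp_sub_one_le_of_re_nonpos {w : ℂ} (hw : w.re ≤ 0) :
    ‖exp w - 1‖ ≤ ‖w‖ := by
  have hbound : ∀ u ∈ {u : ℂ | u.re ≤ 0}, ‖deriv exp u‖ ≤ 1 := fun u hu => by
    simpa [Complex.norm_exp] using hu
  simpa using (convex_halfSpace_re_le 0).norm_image_sub_le_of_norm_deriv_le
    (fun u _ => differentiableAt_exp) hbound (x := 0) (by simp) hw

theorem norm_integral_segment_gauss_le {z : ℂ} (hz : 0 ≤ (z ^ 2).re) :
    ‖∫ t in (0:ℝ)..1, z * exp (-((t : ℂ) * z) ^ 2)‖ ≤ ‖z‖ := by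
  have hbound : ∀ t ∈ Set.uIoc (0:ℝ) 1, ‖z * exp (-((t : ℂ) * z) ^ 2)‖ ≤ ‖z‖ := by
    intro t _
    have : ‖exp (-((t : ℂ) * z) ^ 2)‖ ≤ 1 := by
      rw [norm_exp, Real.exp_le_one_iff, mul_pow, ← ofReal_pow, neg_re, re_ofReal_mul]
      nlinarith [sq_nonneg t]
    simpa [norm_mul] using mul_le_mul_of_nonneg_left this (norm_nonneg z)
  simpa using intervalIntegral.norm_integral_le_of_norm_le_const hbound

theorem norm_phi0_le {z : ℂ} (hz : 0 ≤ (z ^ 2).re) :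
    ‖phi0 z‖ ≤ ‖z‖ / Real.sqrt Real.pi + ‖z‖ ^ 2 / 2 := by
  have hexp : ‖exp (-z ^ 2) - 1‖ ≤ ‖z‖ ^ 2 := by
    refine (Complex.norm_exp_sub_one_le_of_re_nonpos ?_).trans_eq (by rw [norm_neg, norm_pow])
    simpa using hz
  have hsqrt : ‖(2 : ℂ) / (Real.sqrt Real.pi : ℂ)‖ = 2 / Real.sqrt Real.pi := by
    rw [norm_div, Complex.norm_two, norm_real, Real.norm_of_nonneg (Real.sqrt_nonneg _)]
  have hphi : phi0 z = (1 / 2) * ((2 / (Real.sqrt Real.pi : ℂ)) *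
      (∫ t in (0:ℝ)..1, z * exp (-((t : ℂ) * z) ^ 2)) - (exp (-z ^ 2) - 1)) := by
    rw [phi0]; ring
  calc ‖phi0 z‖ ≤ (1 / 2) * (2 / Real.sqrt Real.pi * ‖z‖ + ‖z‖ ^ 2) := by
        rw [hphi, norm_mul, norm_div, norm_one, Complex.norm_two]
        gcongr
        refine (norm_sub_le _ _).trans (add_le_add ?_ hexp)
        rw [norm_mul, hsqrt]
        gcongr
        exact norm_integral_segment_gauss_le hz
    _ = ‖z‖ / Real.sqrt Real.pi + ‖z‖ ^ 2 / 2 := by ring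

theorem integral_Ioi_exp_neg_mul_sq_le {c r : ℝ} (hc : 0 < c) (hr : 0 < r) :
    ∫ x in Set.Ioi r, Real.exp (-c * x ^ 2) ≤ Real.exp (-c * r ^ 2) / (2 * c * r) := by
  have hlin : IntegrableOn (fun x => Real.exp (c * r ^ 2) * Real.exp (-(2 * c * r) * x))
      (Set.Ioi r) :=
    (exp_neg_integrableOn_Ioi r (by positivity)).const_mul _
  calc ∫ x in Set.Ioi r, Real.exp (-c * x ^ 2)
      ≤ ∫ x in Set.Ioi r, Real.exp (c * r ^ 2) * Real.exp (-(2 * c * r) * x) := by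
        refine setIntegral_mono_on ?_ hlin measurableSet_Ioi fun x _ => ?_
        · exact (integrable_exp_neg_mul_sq hc).integrableOn
        · rw [← Real.exp_add]
          gcongr
          nlinarith [mul_nonneg hc.le (sq_nonneg (x - r))]
    _ = Real.exp (-c * r ^ 2) / (2 * c * r) := by
        rw [integral_const_mul, integral_exp_mul_Ioi (by nlinarith) r, neg_div_neg_eq,
          mul_div_assoc', ← Real.exp_add]
        ring_nf

theorem norm_integral_Ioi_cexp_neg_mul_sq_le {b : ℂ} {r : ℝ} (hb : 0 < b.re) (hr : 0 < r) :
    ‖∫ x in Set.Ioi r, cexp (-b * x ^ 2)‖ ≤ Real.exp (-b.re * r ^ 2) / (2 * b.re * r) := by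
  refine (norm_integral_le_of_norm_le ?_ (Eventually.of_forall fun x =>
    (norm_cexp_neg_mul_sq b x).le)).trans (integral_Ioi_exp_neg_mul_sq_le hb hr)
  exact (integrable_exp_neg_mul_sq hb).integrableOn

section Rotation

variable {r β : ℝ}

theorem re_exp_two_mul_mul_I (β : ℝ) : (exp (2 * β * I)).re = Real.cos (2 * β) := by
  rw [show (2 * β * I : ℂ) = (2 * β : ℝ) * I by push_cast; ring, exp_ofReal_mul_I_re]

theorem re_exp_two_mul_mul_I_pos (hβ : |β| < Real.pi / 4) : 0 < (exp (2 * β * I)).re := by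
  rw [re_exp_two_mul_mul_I]
  apply Real.cos_pos_of_mem_Ioo
  constructor <;> linarith [abs_lt.mp hβ]

theorem ofReal_mul_exp_mul_I_sq (r β : ℝ) :
    ((r : ℂ) * exp (β * I)) ^ 2 = exp (2 * β * I) * (r : ℂ) ^ 2 := by
  rw [mul_pow, ← exp_nat_mul]; push_cast; ring_nf

theorem cpow_pi_div_exp_mul_I_half (hβ : |β| < Real.pi / 2) :
    ((Real.pi : ℂ) / exp (2 * β * I)) ^ (1 / 2 : ℂ) = Real.sqrt Real.pi * exp (-(β * I)) := by
  have hlog :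
      (Real.pi : ℂ) / exp (2 * β * I) = exp (Real.log Real.pi + (-2 * β : ℝ) * I) := by
    rw [exp_add, ← ofReal_exp, Real.exp_log Real.pi_pos, div_eq_mul_inv, ← exp_neg]
    push_cast; ring_nf
  have him : (Real.log Real.pi + (-2 * β : ℝ) * I : ℂ).im = -2 * β := by simp
  rw [hlog, cpow_def_of_ne_zero (exp_ne_zero _),
    log_exp (by rw [him]; linarith [(abs_lt.mp hβ).2]) (by rw [him]; linarith [(abs_lt.mp hβ).1]),
    ← Real.exp_log (Real.sqrt_pos.mpr Real.pi_pos), ofReal_exp, ← exp_add,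
    Real.log_sqrt Real.pi_pos.le]
  push_cast; ring_nf

theorem exp_mul_I_mul_integral_gaussian_Ioi (hβ : |β| < Real.pi / 4) :
    exp (β * I) * ∫ x in Set.Ioi (0:ℝ), cexp (-exp (2 * β * I) * x ^ 2) =
      Real.sqrt Real.pi / 2 := by
  rw [integral_gaussian_complex_Ioi (re_exp_two_mul_mul_I_pos hβ),
    cpow_pi_div_exp_mul_I_half (by linarith [Real.pi_pos]), mul_div_assoc', mul_left_comm,
    ← exp_add, add_neg_cancel, exp_zero, mul_one]

theorem integral_segment_gauss_ofReal_mul_exp (r β : ℝ) :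
    ∫ t in (0:ℝ)..1, (r * exp (β * I)) * exp (-((t : ℂ) * (r * exp (β * I))) ^ 2)
      = exp (β * I) * ∫ x in (0:ℝ)..r, cexp (-exp (2 * β * I) * x ^ 2) := by
  have h := intervalIntegral.smul_integral_comp_mul_left (a := 0) (b := 1)
    (fun x : ℝ => cexp (-exp (2 * β * I) * x ^ 2)) r
  rw [mul_zero, mul_one] at h
  rw [← h, ← intervalIntegral.integral_smul, ← intervalIntegral.integral_const_mul]
  congr 1 with t
  rw [mul_comm (t : ℂ), mul_pow, ofReal_mul_exp_mul_I_sq, Complex.real_smul]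
  push_cast; ring_nf

theorem integral_segment_gauss_eq_sub_tail (hr : 0 ≤ r) (hβ : |β| < Real.pi / 4) :
    ∫ t in (0:ℝ)..1, (r * exp (β * I)) * exp (-((t : ℂ) * (r * exp (β * I))) ^ 2)
      = Real.sqrt Real.pi / 2 -
        exp (β * I) * ∫ x in Set.Ioi r, cexp (-exp (2 * β * I) * x ^ 2) := by
  have hint := integrable_cexp_neg_mul_sq (re_exp_two_mul_mul_I_pos hβ)
  rw [integral_segment_gauss_ofReal_mul_exp, ← exp_mul_I_mul_integral_gaussian_Ioi hβ,
    ← mul_sub, intervalIntegral.integral_of_le hr, ← Set.Ioc_union_Ioi_eq_Ioi hr,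
    setIntegral_union (Set.Ioc_disjoint_Ioi le_rfl) measurableSet_Ioi hint.integrableOn
      hint.integrableOn, add_sub_cancel_right]

theorem phi0_neg_ofReal_mul_exp (hr : 0 ≤ r) (hβ : |β| < Real.pi / 4) :
    phi0 (-(r * exp (β * I))) =
      exp (β * I) * (∫ x in Set.Ioi r, cexp (-exp (2 * β * I) * x ^ 2)) / Real.sqrt Real.pi
        - exp (-exp (2 * β * I) * r ^ 2) / 2 := by
  have hsqrt : (Real.sqrt Real.pi : ℂ) ≠ 0 :=
    ofReal_ne_zero.mpr (Real.sqrt_pos.mpr Real.pi_pos).ne'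
  simp only [phi0, mul_neg, neg_mul, neg_sq, intervalIntegral.integral_neg,
    integral_segment_gauss_eq_sub_tail hr hβ, ofReal_mul_exp_mul_I_sq]
  field_simp
  ring

theorem norm_phi0_neg_ofReal_mul_exp_le (hr : 0 < r) (hβ : |β| < Real.pi / 4) :
    ‖phi0 (-(r * exp (β * I)))‖ ≤ Real.exp (-Real.cos (2 * β) * r ^ 2) *
      (1 / (2 * Real.cos (2 * β) * r * Real.sqrt Real.pi) + 1 / 2) := by
  have htail := norm_integral_Ioi_cexp_neg_mul_sq_le (re_exp_two_mul_mul_I_pos hβ) hr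
  rw [re_exp_two_mul_mul_I] at htail
  have hsqrt := Real.sqrt_pos.mpr Real.pi_pos
  rw [phi0_neg_ofReal_mul_exp hr.le hβ]
  refine (norm_sub_le _ _).trans ?_
  rw [norm_div, norm_div, norm_mul, norm_exp_ofReal_mul_I, one_mul, norm_real,
    Real.norm_of_nonneg hsqrt.le, Complex.norm_two, norm_cexp_neg_mul_sq, re_exp_two_mul_mul_I]
  calc _ ≤ Real.exp (-Real.cos (2 * β) * r ^ 2) / (2 * Real.cos (2 * β) * r) / Real.sqrt Real.pi
        + Real.exp (-Real.cos (2 * β) * r ^ 2) / 2 := by gcongr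
    _ = _ := by field_simp

theorem five_thirds_le_sqrt_pi : 5 / 3 ≤ Real.sqrt Real.pi :=
  Real.le_sqrt_of_sq_le (by nlinarith [Real.pi_gt_three])

theorem norm_phi0_neg_ofReal_mul_exp_lt_of_le (hr : 0 ≤ r) (hsmall : r ≤ 7 / 10)
    (hβ : |β| < Real.pi / 4) : ‖phi0 (-(r * exp (β * I)))‖ < 3 / 4 := by
  have hre : 0 ≤ ((-(r * exp (β * I))) ^ 2).re := by
    rw [neg_sq, ofReal_mul_exp_mul_I_sq, ← ofReal_pow, re_mul_ofReal]
    exact mul_nonneg (re_exp_two_mul_mul_I_pos hβ).le (sq_nonneg r)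
  calc ‖phi0 (-(r * exp (β * I)))‖ ≤ r / Real.sqrt Real.pi + r ^ 2 / 2 := by
        simpa [norm_exp_ofReal_mul_I, abs_of_nonneg hr] using norm_phi0_le hre
    _ ≤ r / (5 / 3) + r ^ 2 / 2 := by gcongr; exact five_thirds_le_sqrt_pi
    _ < 3 / 4 := by nlinarith

theorem norm_phi0_neg_ofReal_mul_exp_lt_of_gt (hlarge : 7 / 10 < r)
    (hcos : 9 / 10 ≤ Real.cos (2 * β)) (hβ : |β| < Real.pi / 4) :
    ‖phi0 (-(r * exp (β * I)))‖ < 3 / 4 := by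
  have hexp : Real.exp (-Real.cos (2 * β) * r ^ 2) ≤ 1000 / 1441 := by
    calc Real.exp (-Real.cos (2 * β) * r ^ 2) ≤ Real.exp (-(441 / 1000)) := by
          gcongr; nlinarith
      _ ≤ 1000 / 1441 := by
          rw [Real.exp_neg, show (1000 / 1441 : ℝ) = (1441 / 1000)⁻¹ by norm_num]
          gcongr
          linarith [Real.add_one_le_exp (441 / 1000)]
  have hdenom : 21 / 10 ≤ 2 * Real.cos (2 * β) * r * Real.sqrt Real.pi := by
    have : 63 / 50 ≤ 2 * Real.cos (2 * β) * r := by nlinarith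
    nlinarith [five_thirds_le_sqrt_pi]
  calc ‖phi0 (-(r * exp (β * I)))‖ ≤ Real.exp (-Real.cos (2 * β) * r ^ 2) *
        (1 / (2 * Real.cos (2 * β) * r * Real.sqrt Real.pi) + 1 / 2) :=
        norm_phi0_neg_ofReal_mul_exp_le (by linarith) hβ
    _ ≤ 1000 / 1441 * (1 / (21 / 10) + 1 / 2) := by gcongr
    _ < 3 / 4 := by norm_num

end Rotation

theorem phi0_small_on_a_left_sector :
    ∃ α : ℝ, 0 < α ∧ α < Real.pi / 2 ∧
      ∀ r : ℝ, 0 ≤ r → ∀ θ : ℝ, |θ - Real.pi| ≤ α / 2 →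
        ‖phi0 ((r : ℂ) * Complex.exp (θ * Complex.I))‖ < 3 / 4 := by
  refine ⟨1 / 10, by norm_num, by linarith [Real.pi_gt_three], fun r hr θ hθ => ?_⟩
  set β := θ - Real.pi
  have hβ : |β| ≤ 1 / 20 := by linarith
  have hβ' : |β| < Real.pi / 4 := by linarith [Real.pi_gt_three]
  have hz : (r : ℂ) * exp (θ * I) = -(r * exp (β * I)) := by
    rw [show (θ : ℂ) = β + Real.pi by push_cast [β]; ring, add_mul, exp_add, exp_pi_mul_I]
    ring
  rw [hz]
  rcases le_or_gt r (7 / 10) with hsmall | hlarge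
  · exact norm_phi0_neg_ofReal_mul_exp_lt_of_le hr hsmall hβ'
  · have hcos : 9 / 10 ≤ Real.cos (2 * β) := by
      nlinarith [Real.one_sub_sq_div_two_le_cos (x := 2 * β), abs_le.mp hβ]
    exact norm_phi0_neg_ofReal_mul_exp_lt_of_gt hlarge hcos hβ'
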